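/- arXiv:1708.00343 — 3 statements merged into one kernel-verified Lean document; each statement's English description precedes it below -/
import Mathlib

section
/- Let f be holomorphic on an open set containing the closed disk D̄(z₀, r) except for finitely many poles z₁, …, z_N inside the open disk, none equal to z₀, with orders n₁, …, n_N. For each i define h_i(z) = (z - z₀)(z - z_i)^{n_i - 1} ∏_{j ≠ i} (z - z_j)^{n_j}. Then (1/(2πi)) ∮_γ f(z)h_i(z)/(z - z₀) dz = R_i ∏_{j ≠ i} (z_i - z_j)^{n_j}, where R_i is the coefficient of (z - z_i)^{-n_i} in the Laurent expansion of f at z_i. -/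
open Complex Metric Filter Finset

/-- Let `f` be holomorphic on an open set containing `closedBall z₀ r` except for
finitely many poles `zs i` of order `n i` inside the open ball, none equal to `z₀`.
For each `i`, with `h_i z = (z - z₀)(z - zs i)^(n i - 1) ∏_{j ≠ i} (z - zs j)^(n j)`,
`(2πi)⁻¹ ∮ f z * h_i z / (z - z₀) dz = R i * ∏_{j ≠ i} (zs i - zs j)^(n j)`,
where `R i` is the leading Laurent coefficient of `f` at `zs i`, characterized as the
limit of `(z - zs i)^(n i) * f z` as `z → zs i`. -/
theorem stmt_4 (f g : ℂ → ℂ) (U : Set ℂ) (z₀ : ℂ) (r : ℝ) (hr : 0 < r)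
    (hU : IsOpen U) (hsub : closedBall z₀ r ⊆ U)
    (N : ℕ) (zs : Fin N → ℂ) (n : Fin N → ℕ) (R : Fin N → ℂ)
    (hinj : Function.Injective zs)
    (hball : ∀ i, zs i ∈ ball z₀ r) (hz₀ : ∀ i, zs i ≠ z₀)
    (hord : ∀ i, 1 ≤ n i)
    (hg : DifferentiableOn ℂ g U)
    (hfg : ∀ z ∈ U \ Set.range zs, f z = g z / ∏ j, (z - zs j) ^ (n j))
    (hres : ∀ i, Tendsto (fun z => (z - zs i) ^ (n i) * f z)
      (nhdsWithin (zs i) {zs i}ᶜ) (nhds (R i))) :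
    ∀ i, (2 * Real.pi * Complex.I)⁻¹ *
        (∮ z in C(z₀, r),
          f z * ((z - z₀) * (z - zs i) ^ (n i - 1) * ∏ j ∈ univ.erase i, (z - zs j) ^ (n j))
            / (z - z₀))
      = R i * ∏ j ∈ univ.erase i, (zs i - zs j) ^ (n j) := by
  intro i
  set P : ℂ := ∏ j ∈ univ.erase i, (zs i - zs j) ^ (n j) with hP
  have hPne : P ≠ 0 := by
    rw [hP]
    apply prod_ne_zero_iff.mpr
    intro j hj
    exact pow_ne_zero _ (sub_ne_zero.mpr (fun h => (mem_erase.mp hj).1 (hinj h).symm))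
  have hzi_mem : zs i ∈ U := hsub (ball_subset_closedBall (hball i))
  -- Step 1: g (zs i) = R i * P
  have hlim2 : Tendsto (fun z => (z - zs i) ^ (n i) * f z)
      (nhdsWithin (zs i) {zs i}ᶜ) (nhds (g (zs i) / P)) := by
    have hcont : ContinuousAt (fun z => g z / ∏ j ∈ univ.erase i, (z - zs j) ^ (n j)) (zs i) := by
      apply ContinuousAt.div
      · exact (hg.continuousOn.continuousAt (hU.mem_nhds hzi_mem))
      · fun_prop
      · exact hPne
    have hev : ∀ᶠ z in nhdsWithin (zs i) {zs i}ᶜ,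
        g z / ∏ j ∈ univ.erase i, (z - zs j) ^ (n j) = (z - zs i) ^ (n i) * f z := by
      have hopen : IsOpen (U \ (zs '' (Set.univ \ {i}))) := by
        apply hU.sdiff
        exact (Set.Finite.image _ (Set.toFinite _)).isClosed
      have hmem : zs i ∈ U \ (zs '' (Set.univ \ {i})) := by
        refine ⟨hzi_mem, ?_⟩
        rintro ⟨j, hj, hje⟩
        exact hj.2 (hinj hje)
      filter_upwards [nhdsWithin_le_nhds (hopen.mem_nhds hmem), self_mem_nhdsWithin]
        with z hz hzne
      have hzU : z ∈ U := hz.1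
      have hzr : z ∉ Set.range zs := by
        rintro ⟨j, rfl⟩
        rcases eq_or_ne j i with rfl | hji
        · exact hzne rfl
        · exact hz.2 ⟨j, ⟨Set.mem_univ _, hji⟩, rfl⟩
      have hne : ∀ j ∈ univ.erase i, (z - zs j) ^ (n j) ≠ 0 := by
        intro j hj
        exact pow_ne_zero _ (sub_ne_zero.mpr (fun h => hzr ⟨j, h.symm⟩))
      have hQne : (∏ j ∈ univ.erase i, (z - zs j) ^ (n j)) ≠ 0 := prod_ne_zero_iff.mpr hne
      have hzi : z - zs i ≠ 0 := sub_ne_zero.mpr (fun h => hzne h)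
      rw [hfg z ⟨hzU, hzr⟩, ← Finset.mul_prod_erase univ _ (mem_univ i)]
      field_simp
    exact (hcont.continuousWithinAt.tendsto).congr' hev
  have hRi : R i = g (zs i) / P :=
    tendsto_nhds_unique (hres i) hlim2
  have hgzi : g (zs i) = R i * P := by rw [hRi]; field_simp
  -- Step 2: the circle integral
  have hint : (∮ z in C(z₀, r),
      f z * ((z - z₀) * (z - zs i) ^ (n i - 1) * ∏ j ∈ univ.erase i, (z - zs j) ^ (n j))
        / (z - z₀)) = ∮ z in C(z₀, r), (z - zs i)⁻¹ • g z := by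
    apply circleIntegral.integral_congr hr.le
    intro z hz
    have hdz : dist z z₀ = r := mem_sphere.mp hz
    have hzU : z ∈ U := hsub (sphere_subset_closedBall hz)
    have hzz₀ : z - z₀ ≠ 0 := by
      intro h
      rw [sub_eq_zero] at h
      rw [h, dist_self] at hdz
      exact hr.ne hdz
    have hzr : z ∉ Set.range zs := by
      rintro ⟨j, rfl⟩
      have h1 : dist (zs j) z₀ < r := mem_ball.mp (hball j)
      exact absurd hdz h1.ne
    have hne : ∀ j ∈ univ.erase i, (z - zs j) ^ (n j) ≠ 0 := fun j _ =>
      pow_ne_zero _ (sub_ne_zero.mpr (fun h => hzr ⟨j, h.symm⟩))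
    have hQne : (∏ j ∈ univ.erase i, (z - zs j) ^ (n j)) ≠ 0 := prod_ne_zero_iff.mpr hne
    have hzi : z - zs i ≠ 0 := sub_ne_zero.mpr (fun h => hzr ⟨i, h.symm⟩)
    have hpow : (z - zs i) ^ (n i) = (z - zs i) * (z - zs i) ^ (n i - 1) := by
      nth_rewrite 1 [show n i = (n i - 1) + 1 from (Nat.succ_pred_eq_of_pos (hord i)).symm]
      rw [pow_succ']
    simp only [smul_eq_mul]
    have hD : (z - zs i) * (z - zs i) ^ (n i - 1) * ∏ j ∈ univ.erase i, (z - zs j) ^ (n j) ≠ 0 :=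
      mul_ne_zero (mul_ne_zero hzi (pow_ne_zero _ hzi)) hQne
    rw [hfg z ⟨hzU, hzr⟩, ← Finset.mul_prod_erase univ _ (mem_univ i), hpow,
      inv_mul_eq_div, div_eq_div_iff hzz₀ hzi, div_mul_eq_mul_div, div_mul_eq_mul_div,
      div_eq_iff hD]
    ring
  rw [hint]
  have hdc : DiffContOnCl ℂ g (ball z₀ r) := by
    apply DifferentiableOn.diffContOnCl
    rw [closure_ball z₀ hr.ne']
    exact hg.mono hsub
  rw [hdc.circleIntegral_sub_inv_smul (hball i)]
  rw [smul_eq_mul, ← mul_assoc, inv_mul_cancel₀ Complex.two_pi_I_ne_zero, one_mul, hgzi]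
end

section
/- If f has a pole of order n ≥ 1 at w, then for all but countably many k ∈ ℂ, the function z ↦ f(z)e^{ik(z−w)} has residue at w not equal to zero. In fact, the residue of f(z)e^{ik(z−w)} at w is a polynomial in k of degree n−1 with leading coefficient a_{−n}(ik)^{n−1}/(n−1)! where a_{−n} ≠ 0 is the leading Laurent coefficient, hence it is nonzero for all but at most n−1 values of k. -/
/-!
On a small circle, `f z * exp (c (z - w)) = h z / (z - w) ^ n` with `h z = exp (c (z - w)) * g z`
holomorphic, so Cauchy's formula turns the residue into `h⁽ⁿ⁻¹⁾(w) / (n - 1)!`, which Leibniz's rule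
expands into a polynomial in `c` whose top coefficient is `g w / (n - 1)!`. A nonzero polynomial of
degree at most `n - 1` has at most `n - 1` roots.
-/

open Complex Metric Filter

open Polynomial in
theorem finite_setOf_sum_mul_pow_eq_zero_and_ncard_le {K : Type*} [CommRing K] [IsDomain K]
    {n : ℕ} {a : ℕ → K} (ha : a n ≠ 0) :
    {x | ∑ m ∈ Finset.range (n + 1), a m * x ^ m = 0}.Finite ∧
      {x | ∑ m ∈ Finset.range (n + 1), a m * x ^ m = 0}.ncard ≤ n := by
  set P : K[X] := ∑ m ∈ Finset.range (n + 1), C (a m) * X ^ m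
  have hcoeff : P.coeff n = a n := by simp [P]
  have hP : P ≠ 0 := fun h => ha (by simpa [h] using hcoeff.symm)
  have hdeg : P.natDegree ≤ n := natDegree_sum_le_of_forall_le _ _ fun m hm =>
    (natDegree_C_mul_X_pow_le _ _).trans (Finset.mem_range_succ_iff.1 hm)
  have hroots : {x | ∑ m ∈ Finset.range (n + 1), a m * x ^ m = 0} = P.rootSet K := by
    ext x
    simp [mem_rootSet, hP, P]
  rw [hroots]
  exact ⟨P.rootSet_finite K, (P.ncard_rootSet_le K).trans hdeg⟩

theorem two_pi_I_inv_mul_circleIntegral_div_sub_pow_succ {h : ℂ → ℂ} {c : ℂ} {R : ℝ}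
    (hR : 0 < R) (hh : DifferentiableOn ℂ h (closedBall c R)) (n : ℕ) :
    (2 * Real.pi * I)⁻¹ * ∮ z in C(c, R), h z / (z - c) ^ (n + 1)
      = iteratedDeriv n h c / n.factorial := by
  have hcauchy := hh.circleIntegral_one_div_sub_center_pow_smul hR n
  simp only [smul_eq_mul, one_div_mul_eq_div] at hcauchy
  rw [hcauchy]
  field_simp [two_pi_I_ne_zero]

theorem iteratedDeriv_cexp_const_mul_sub_mul {g : ℂ → ℂ} {w : ℂ} {n : ℕ} (hg : ContDiffAt ℂ n g w)
    (c : ℂ) :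
    iteratedDeriv n (fun z => exp (c * (z - w)) * g z) w
      = ∑ m ∈ Finset.range (n + 1), n.choose m * c ^ m * iteratedDeriv (n - m) g w := by
  have hexp : ∀ m, iteratedDeriv m (fun z => exp (c * (z - w))) w = c ^ m := fun m => by
    simp [iteratedDeriv_comp_sub_const (f := fun s => exp (c * s))]
  rw [iteratedDeriv_fun_mul (by fun_prop) hg]
  simp only [hexp]

theorem two_pi_I_inv_mul_circleIntegral_mul_cexp {f g : ℂ → ℂ} {w : ℂ} {n : ℕ} {ε : ℝ}
    (hε : 0 < ε) (hg : DifferentiableOn ℂ g (closedBall w ε))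
    (hfg : ∀ z ∈ sphere w ε, f z = g z / (z - w) ^ (n + 1)) (c : ℂ) :
    (2 * Real.pi * I)⁻¹ * ∮ z in C(w, ε), f z * exp (c * (z - w))
      = ∑ m ∈ Finset.range (n + 1),
          iteratedDeriv (n - m) g w / (n - m).factorial * c ^ m / m.factorial := by
  have hh : DifferentiableOn ℂ (fun z => exp (c * (z - w)) * g z) (closedBall w ε) :=
    (by fun_prop : Differentiable ℂ fun z => exp (c * (z - w))).differentiableOn.mul hg
  have hgw : ContDiffAt ℂ n g w :=
    (hg.analyticAt (closedBall_mem_nhds w hε)).contDiffAt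
  rw [circleIntegral.integral_congr hε.le fun z hz =>
      show f z * exp (c * (z - w)) = exp (c * (z - w)) * g z / (z - w) ^ (n + 1) by
        rw [hfg z hz]; ring,
    two_pi_I_inv_mul_circleIntegral_div_sub_pow_succ hε hh, iteratedDeriv_cexp_const_mul_sub_mul hgw,
    Finset.sum_div]
  refine Finset.sum_congr rfl fun m hm => ?_
  rw [Nat.cast_choose ℂ (Finset.mem_range_succ_iff.1 hm)]
  field_simp [n.factorial_ne_zero]

/-- If `f` has a pole of order `n ≥ 1` at `w` (i.e. `f z = g z / (z - w)^n` with `g`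
holomorphic near `w` and `g w ≠ 0`, so the leading Laurent coefficient is
`a₋ₙ = g w ≠ 0`), then the residue of `z ↦ f z * exp(ik(z−w))` at `w` equals the
polynomial `P k = ∑_{m=0}^{n−1} a₋₍ₘ₊₁₎ (ik)^m / m!` in `k`, where
`a₋₍ₘ₊₁₎ = g^{(n−1−m)}(w)/(n−1−m)!`; this polynomial has leading coefficient
`a₋ₙ i^{n−1}/(n−1)!` in `k^{n−1}`, and its zero set is finite with at most `n − 1`
elements, so the residue is nonzero for all but countably many `k`. -/
theorem stmt_11 (f g : ℂ → ℂ) (U : Set ℂ) (w : ℂ) (n : ℕ) (hn : 1 ≤ n)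
    (hU : IsOpen U) (hwU : w ∈ U)
    (hg : DifferentiableOn ℂ g U) (hgw : g w ≠ 0)
    (hfg : ∀ z ∈ U \ {w}, f z = g z / (z - w) ^ n) :
    (∀ k : ℂ, ∀ᶠ ε in nhdsWithin (0 : ℝ) (Set.Ioi 0),
        (2 * Real.pi * Complex.I)⁻¹ *
            (∮ z in C(w, ε), f z * Complex.exp (Complex.I * k * (z - w)))
          = ∑ m ∈ Finset.range n,
              (iteratedDeriv (n - 1 - m) g w / (Nat.factorial (n - 1 - m))) *
                (Complex.I * k) ^ m / (Nat.factorial m)) ∧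
    g w * Complex.I ^ (n - 1) / (Nat.factorial (n - 1)) ≠ 0 ∧
    {k : ℂ | ∑ m ∈ Finset.range n,
        (iteratedDeriv (n - 1 - m) g w / (Nat.factorial (n - 1 - m))) *
          (Complex.I * k) ^ m / (Nat.factorial m) = 0}.Finite ∧
    Set.ncard {k : ℂ | ∑ m ∈ Finset.range n,
        (iteratedDeriv (n - 1 - m) g w / (Nat.factorial (n - 1 - m))) *
          (Complex.I * k) ^ m / (Nat.factorial m) = 0} ≤ n - 1 := by
  obtain ⟨n, rfl⟩ : ∃ m, n = m + 1 := ⟨n - 1, by omega⟩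
  simp only [Nat.add_sub_cancel]
  set a : ℕ → ℂ := fun m => iteratedDeriv (n - m) g w / (n - m).factorial * I ^ m / m.factorial
  have hsum : ∀ k : ℂ, ∑ m ∈ Finset.range (n + 1),
      iteratedDeriv (n - m) g w / (n - m).factorial * (I * k) ^ m / m.factorial
        = ∑ m ∈ Finset.range (n + 1), a m * k ^ m := fun k =>
    Finset.sum_congr rfl fun m _ => by simp only [a, mul_pow]; ring
  have hlead : g w * I ^ n / n.factorial ≠ 0 := by simp [hgw, I_ne_zero, n.factorial_ne_zero]
  obtain ⟨hfin, hcard⟩ := finite_setOf_sum_mul_pow_eq_zero_and_ncard_le (a := a) (n := n)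
    (by simpa [a] using hlead)
  refine ⟨fun k => ?_, hlead, by simpa only [hsum] using hfin, by simpa only [hsum] using hcard⟩
  filter_upwards [nhdsWithin_le_nhds (eventually_closedBall_subset (hU.mem_nhds hwU)),
    self_mem_nhdsWithin] with ε hεU (hε : 0 < ε)
  exact two_pi_I_inv_mul_circleIntegral_mul_cexp hε (hg.mono hεU) (fun z hz => hfg z
    ⟨hεU (sphere_subset_closedBall hz), ne_of_mem_sphere hz hε.ne'⟩) (I * k)
end

section
/- Let f be holomorphic on an open set containing the closed disk D̄(z₀, r) except for a finite set of poles in the open disk, with f holomorphic at z₀. If for every entire function h, f(z₀)h(z₀) = (1/(2πi)) ∮_γ f(z)h(z)/(z − z₀) dz (γ the circle |z − z₀| = r), then f has no poles in D(z₀, r), i.e., f extends holomorphically to the open disk. -/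
/-!
Testing with `h z = (z - z₀) * q z` gives `∮ f q = 0` for every entire `q`. Multiplying `f` by the
polynomial `P` that vanishes at every pole to at least its order removes the singularities, so
`G = P f` is holomorphic and `∮ G q / P = 0` for every entire `q`. For a root `w` of `P`, the choice
`q = P / (z - w)` and Cauchy's formula give `G w = 0`, so `z - w` divides `G`; peeling off the roots
of `P` one at a time shows that `G / P` is holomorphic, and it agrees with `f` off the poles.
-/

open Complex Metric Filter Set Function Topology

def nodalProd {R : Type*} [CommRing R] (M : Multiset R) (z : R) : R :=
  (M.map (z - ·)).prod

section nodalProd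

variable {R : Type*} [CommRing R] {M N : Multiset R} {w z : R}

@[simp]
theorem nodalProd_zero : nodalProd 0 z = 1 := by
  simp [nodalProd]

@[simp]
theorem nodalProd_cons : nodalProd (w ::ₘ M) z = (z - w) * nodalProd M z := by
  simp [nodalProd]

theorem nodalProd_add : nodalProd (M + N) z = nodalProd M z * nodalProd N z := by
  simp [nodalProd]

theorem nodalProd_replicate (k : ℕ) : nodalProd (Multiset.replicate k w) z = (z - w) ^ k := by
  simp [nodalProd]

theorem nodalProd_ne_zero [IsDomain R] (hz : z ∉ M) : nodalProd M z ≠ 0 :=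
  Multiset.prod_ne_zero fun h0 => by
    obtain ⟨w, hw, hzw⟩ := Multiset.mem_map.1 h0
    exact hz (sub_eq_zero.1 hzw ▸ hw)

end nodalProd

theorem differentiable_nodalProd {𝕜 : Type*} [NontriviallyNormedField 𝕜] (M : Multiset 𝕜) :
    Differentiable 𝕜 (nodalProd M) := by
  induction M using Multiset.induction with
  | empty =>
    rw [show nodalProd (0 : Multiset 𝕜) = 1 from funext fun _ => nodalProd_zero]
    exact differentiable_const 1
  | cons w M ih =>
    rw [show nodalProd (w ::ₘ M) = fun z => (z - w) * nodalProd M z from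
      funext fun _ => nodalProd_cons]
    exact (differentiable_id.sub_const w).mul ih

theorem exists_differentiableOn_eqOn_of_tendsto {E : Type*} [NormedAddCommGroup E]
    [NormedSpace ℂ E] [CompleteSpace E] {F : ℂ → E} {U S : Set ℂ} (hU : IsOpen U)
    (hS : S.Finite) (hF : DifferentiableOn ℂ F (U \ S))
    (hlim : ∀ x ∈ S, ∃ L, Tendsto F (𝓝[≠] x) (𝓝 L)) :
    ∃ G : ℂ → E, DifferentiableOn ℂ G U ∧ EqOn G F (U \ S) := by
  classical
  set G : ℂ → E := fun z => if z ∈ S then limUnder (𝓝[≠] z) F else F z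
  refine ⟨G, fun x hxU => ?_, fun z hz => if_neg hz.2⟩
  set V := U \ (S \ {x})
  have hV : V ∈ 𝓝 x := (hU.sdiff hS.sdiff.isClosed).mem_nhds ⟨hxU, fun h => h.2 rfl⟩
  have hGV : EqOn G (update F x (G x)) V := fun z hz => by
    by_cases hzx : z = x
    · subst hzx; simp
    · have hzS : z ∉ S := fun h => hz.2 ⟨h, hzx⟩
      simp [G, hzS, hzx]
  suffices DifferentiableOn ℂ (update F x (G x)) V from
    ((this.differentiableAt hV).congr_of_eventuallyEq
      (eventuallyEq_of_mem hV hGV)).differentiableWithinAt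
  by_cases hxS : x ∈ S
  · obtain ⟨L, hL⟩ := hlim x hxS
    have hFV : DifferentiableOn ℂ F (V \ {x}) :=
      hF.mono fun z hz => ⟨hz.1.1, fun hzS => hz.1.2 ⟨hzS, hz.2⟩⟩
    simpa [G, hxS] using differentiableOn_update_limUnder_of_isLittleO hV hFV
      ((hL.sub_const (F x)).norm.isBoundedUnder_le.isLittleO_sub_self_inv)
  · simpa [G, hxS, V, sdiff_singleton_eq_self hxS] using hF

theorem exists_differentiableOn_eqOn_nodalProd_mul {f : ℂ → ℂ} {U S : Set ℂ} (hU : IsOpen U)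
    (hS : S.Finite) (hf : DifferentiableOn ℂ f (U \ S))
    (hpole : ∀ w ∈ S, ∃ n : ℕ, ∃ L : ℂ, Tendsto (fun z => (z - w) ^ n * f z) (𝓝[≠] w) (𝓝 L)) :
    ∃ M : Multiset ℂ, (∀ w ∈ M, w ∈ S) ∧
      ∃ G : ℂ → ℂ, DifferentiableOn ℂ G U ∧ EqOn G (fun z => nodalProd M z * f z) (U \ S) := by
  classical
  choose! n L hL using hpole
  set M := ∑ a ∈ hS.toFinset, Multiset.replicate (n a) a
  have hMS : ∀ w ∈ M, w ∈ S := by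
    simp only [M, Multiset.mem_sum, Multiset.mem_replicate, Finite.mem_toFinset]
    rintro w ⟨a, ha, -, rfl⟩
    exact ha
  refine ⟨M, hMS, exists_differentiableOn_eqOn_of_tendsto hU hS
    ((differentiable_nodalProd M).differentiableOn.mul hf) fun x hx => ?_⟩
  let N := ∑ a ∈ hS.toFinset.erase x, Multiset.replicate (n a) a
  have hsplit : ∀ z, nodalProd M z = (z - x) ^ n x * nodalProd N z := fun z => by
    rw [← nodalProd_replicate, ← nodalProd_add,
      Finset.add_sum_erase _ (fun a => Multiset.replicate (n a) a) (hS.mem_toFinset.2 hx)]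
  have hN : Tendsto (nodalProd N) (𝓝[≠] x) (𝓝 (nodalProd N x)) :=
    (differentiable_nodalProd N).continuous.continuousAt.tendsto.mono_left nhdsWithin_le_nhds
  refine ⟨nodalProd N x * L x, (hN.mul (hL x hx)).congr fun z => ?_⟩
  rw [hsplit]
  ring

theorem exists_eq_mul_nodalProd_of_circleIntegral_eq_zero {G : ℂ → ℂ} {c : ℂ} {R : ℝ}
    {M : Multiset ℂ} (hG : DifferentiableOn ℂ G (closedBall c R)) (hM : ∀ w ∈ M, w ∈ ball c R)
    (hint : ∀ q : ℂ → ℂ, Differentiable ℂ q → ∮ z in C(c, R), G z * q z / nodalProd M z = 0) :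
    ∃ H : ℂ → ℂ, DifferentiableOn ℂ H (closedBall c R) ∧ ∀ z, G z = H z * nodalProd M z := by
  induction M using Multiset.induction generalizing G with
  | empty => exact ⟨G, hG, by simp⟩
  | cons w M ih =>
    have hw : w ∈ ball c R := hM w (Multiset.mem_cons_self w M)
    have hR : 0 ≤ R := (pos_of_mem_ball hw).le
    have hne : ∀ z ∈ sphere c R, z - w ≠ 0 ∧ nodalProd M z ≠ 0 := fun z hz => by
      have hzM := nodalProd_ne_zero fun h => disjoint_left.1 sphere_disjoint_ball hz (hM z h)
      rwa [nodalProd_cons, mul_ne_zero_iff] at hzM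
    have hGw : G w = 0 := by
      have hcauchy : ∮ z in C(c, R), G z * nodalProd M z / nodalProd (w ::ₘ M) z =
          2 * Real.pi * I * G w := by
        rw [← smul_eq_mul, ← hG.circleIntegral_sub_inv_smul hw]
        refine circleIntegral.integral_congr hR fun z hz => ?_
        obtain ⟨hzw, hzM⟩ := hne z hz
        rw [nodalProd_cons, smul_eq_mul]
        field_simp
      have h := hint _ (differentiable_nodalProd M)
      rw [hcauchy] at h
      simpa [two_pi_I_ne_zero] using h
    have hfac : ∀ z, G z = (z - w) * dslope G w z := fun z => by
      rw [← smul_eq_mul, sub_smul_dslope, hGw, sub_zero]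
    have hdslope : DifferentiableOn ℂ (dslope G w) (closedBall c R) :=
      (differentiableOn_dslope (mem_of_superset (isOpen_ball.mem_nhds hw)
        ball_subset_closedBall)).2 hG
    obtain ⟨H, hH, hGH⟩ := ih hdslope (fun v hv => hM v (Multiset.mem_cons_of_mem hv))
      fun q hq => by
        rw [← hint q hq]
        refine circleIntegral.integral_congr hR fun z hz => ?_
        obtain ⟨hzw, hzM⟩ := hne z hz
        rw [hfac z, nodalProd_cons]
        field_simp
    exact ⟨H, hH, fun z => by rw [hfac z, hGH z, nodalProd_cons]; ring⟩

theorem circleIntegral_mul_eq_zero_of_forall_mean_value {f : ℂ → ℂ} {z₀ : ℂ} {r : ℝ} (hr : 0 < r)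
    (htest : ∀ h : ℂ → ℂ, Differentiable ℂ h →
      f z₀ * h z₀ = (2 * Real.pi * I)⁻¹ * ∮ z in C(z₀, r), f z * h z / (z - z₀))
    {q : ℂ → ℂ} (hq : Differentiable ℂ q) : ∮ z in C(z₀, r), f z * q z = 0 := by
  have h := htest (fun z => (z - z₀) * q z) ((differentiable_id.sub_const z₀).mul hq)
  simp only [sub_self, zero_mul, mul_zero, zero_eq_mul, inv_eq_zero, two_pi_I_ne_zero,
    false_or] at h
  rw [← h]
  refine circleIntegral.integral_congr hr.le fun z hz => ?_
  have hz₀ : z - z₀ ≠ 0 := sub_ne_zero.2 (ne_of_mem_sphere hz hr.ne')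
  field_simp

theorem stmt_15_general (f : ℂ → ℂ) (U : Set ℂ) (z₀ : ℂ) (r : ℝ) (hr : 0 < r)
    (hU : IsOpen U) (hsub : closedBall z₀ r ⊆ U)
    (S : Set ℂ) (hS : S.Finite) (hSball : S ⊆ ball z₀ r)
    (hf : DifferentiableOn ℂ f (U \ S))
    (hpole : ∀ w ∈ S, ∃ n : ℕ, ∃ L : ℂ,
      Tendsto (fun z => (z - w) ^ n * f z) (nhdsWithin w {w}ᶜ) (nhds L))
    (htest : ∀ h : ℂ → ℂ, Differentiable ℂ h →
      f z₀ * h z₀ = (2 * Real.pi * Complex.I)⁻¹ *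
        (∮ z in C(z₀, r), f z * h z / (z - z₀))) :
    ∃ g : ℂ → ℂ, DifferentiableOn ℂ g (ball z₀ r) ∧
      ∀ z ∈ ball z₀ r \ S, g z = f z := by
  obtain ⟨M, hMS, G, hG, hGf⟩ := exists_differentiableOn_eqOn_nodalProd_mul hU hS hf hpole
  have hint : ∀ q : ℂ → ℂ, Differentiable ℂ q →
      ∮ z in C(z₀, r), G z * q z / nodalProd M z = 0 := fun q hq => by
    rw [← circleIntegral_mul_eq_zero_of_forall_mean_value hr htest hq]
    refine circleIntegral.integral_congr hr.le fun z hz => ?_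
    have hzS : z ∉ S := fun h => disjoint_left.1 sphere_disjoint_ball hz (hSball h)
    have hzM : nodalProd M z ≠ 0 := nodalProd_ne_zero fun h => hzS (hMS z h)
    rw [hGf ⟨hsub (sphere_subset_closedBall hz), hzS⟩]
    field_simp
  obtain ⟨H, hH, hGH⟩ := exists_eq_mul_nodalProd_of_circleIntegral_eq_zero (hG.mono hsub)
    (fun w hw => hSball (hMS w hw)) hint
  refine ⟨H, hH.mono ball_subset_closedBall, fun z hz => ?_⟩
  have hzM : nodalProd M z ≠ 0 := nodalProd_ne_zero fun h => hz.2 (hMS z h)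
  refine mul_right_cancel₀ hzM ?_
  rw [← hGH, hGf ⟨hsub (ball_subset_closedBall hz.1), hz.2⟩, mul_comm]

/-- Let `f` be holomorphic on an open set `U ⊇ closedBall z₀ r` except on a finite
set `S` of isolated singularities with finite principal parts (poles) inside the
open ball, with `z₀ ∉ S`.  If for every entire function `h` the generalized
mean-value identity `f z₀ * h z₀ = (2πi)⁻¹ ∮ f z * h z / (z − z₀) dz` holds, then
`f` has no poles in the ball: it extends holomorphically to `ball z₀ r`. -/
theorem stmt_15 (f : ℂ → ℂ) (U : Set ℂ) (z₀ : ℂ) (r : ℝ) (hr : 0 < r)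
    (hU : IsOpen U) (hsub : closedBall z₀ r ⊆ U)
    (S : Set ℂ) (hS : S.Finite) (hSball : S ⊆ ball z₀ r) (hz₀ : z₀ ∉ S)
    (hf : DifferentiableOn ℂ f (U \ S))
    (hpole : ∀ w ∈ S, ∃ n : ℕ, ∃ L : ℂ,
      Tendsto (fun z => (z - w) ^ n * f z) (nhdsWithin w {w}ᶜ) (nhds L))
    (htest : ∀ h : ℂ → ℂ, Differentiable ℂ h →
      f z₀ * h z₀ = (2 * Real.pi * Complex.I)⁻¹ *
        (∮ z in C(z₀, r), f z * h z / (z - z₀))) :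
    ∃ g : ℂ → ℂ, DifferentiableOn ℂ g (ball z₀ r) ∧
      ∀ z ∈ ball z₀ r \ S, g z = f z :=
  stmt_15_general f U z₀ r hr hU hsub S hS hSball hf hpole htest
end
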